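/- Let 𝒮 ⊆ 𝒯 be a family of measurable sets such that for every A ∈ 𝒮, E(Cov_n(1_A,1_A|I)) → 0 as n → ∞. Then for every A in the Dynkin system generated by 𝒮, E(Cov_n(1_A,1_A|I)) → 0 as n → ∞. -/

import Mathlib

open MeasureTheory Filter Topology

noncomputable section

/-- The σ-algebra of invariant measurable sets of `T`. -/
def invSigma {Ω : Type*} [MeasurableSpace Ω] (T : Ω → Ω) : MeasurableSpace Ω where
  MeasurableSet' A := MeasurableSet A ∧ T ⁻¹' A = A
  measurableSet_empty := ⟨MeasurableSet.empty, by simp⟩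
  measurableSet_compl := fun A hA => ⟨hA.1.compl, by rw [Set.preimage_compl, hA.2]⟩
  measurableSet_iUnion := fun f hf =>
    ⟨MeasurableSet.iUnion fun i => (hf i).1, by
      rw [Set.preimage_iUnion]
      exact Set.iUnion_congr fun i => (hf i).2⟩

/-- `E(Cov_n(f,g|I)) = ∫ conj(f)·(g∘T^n) dμ − ∫ conj(E(f|I))·E(g|I) dμ`. -/
def expCovInv {Ω : Type*} [MeasurableSpace Ω] (μ : Measure Ω) (T : Ω → Ω)
    (f g : Ω → ℂ) (n : ℕ) : ℂ :=
  (∫ x, (starRingEnd ℂ) (f x) * g (T^[n] x) ∂μ) -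
    ∫ x, (starRingEnd ℂ) ((μ[f | invSigma T]) x) * (μ[g | invSigma T]) x ∂μ

/-- The Dynkin system generated by a family `S` of sets: the smallest family containing `S`
which contains the whole space, is stable under relative complements `B \ A` for `A ⊆ B`
both in the family, and is stable under countable increasing unions. -/
inductive DynkinGen {Ω : Type*} (S : Set (Set Ω)) : Set Ω → Prop
  | basic : ∀ A ∈ S, DynkinGen S A
  | univ : DynkinGen S Set.univ
  | diff : ∀ A B : Set Ω, DynkinGen S A → DynkinGen S B → A ⊆ B → DynkinGen S (B \ A)
  | iUnion_mono : ∀ f : ℕ → Set Ω, (∀ n, f n ⊆ f (n + 1)) → (∀ n, DynkinGen S (f n)) →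
      DynkinGen S (⋃ n, f n)

/-!
With `U` the Koopman operator on `L²(μ)` and `K` the subspace of `T`-invariant functions,
`E(Cov_n(f,g|I)) = ⟪f - P_K f, Uⁿ (g - P_K g)⟫`, because `U` fixes `K` pointwise. For an isometry,
`⟪f, Uⁿ f⟫ → 0` already forces `⟪g, Uⁿ f⟫ → 0` for every `g`: the `g` with this property form a
closed subspace containing the orbit of `f`, and every `g` orthogonal to the orbit qualifies
trivially. So the `f` with `⟪f - P_K f, Uⁿ (f - P_K f)⟫ → 0` form a closed subspace of `L²(μ)`.
It contains `1_Ω ∈ K`, and indicators of relative complements are differences of indicators while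
indicators of increasing unions converge in `L²`, so the good sets form a Dynkin system.
-/

open scoped InnerProductSpace

lemma isClosed_setOf_tendsto_zero_of_lipschitzWith {X E : Type*} [PseudoMetricSpace X]
    [SeminormedAddCommGroup E] {F : ℕ → X → E} {K : NNReal} (hF : ∀ n, LipschitzWith K (F n)) :
    IsClosed {x | Tendsto (F · x) atTop (𝓝 0)} :=
  (LipschitzWith.uniformEquicontinuous F K hF).equicontinuous.isClosed_setOfPred_tendsto
    continuous_const

namespace LinearIsometry

variable {𝕜 H : Type*} [RCLike 𝕜] [NormedAddCommGroup H] [InnerProductSpace 𝕜 H]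

def decorrelatedSubspace (U : H →ₗᵢ[𝕜] H) (f : H) : Submodule 𝕜 H where
  carrier := {g | Tendsto (fun n ↦ ⟪g, (U ^ n) f⟫_𝕜) atTop (𝓝 0)}
  add_mem' hg hh := by
    simpa only [Set.mem_ofPred_eq, inner_add_left, add_zero] using hg.add hh
  zero_mem' := by simpa only [Set.mem_ofPred_eq, inner_zero_left] using tendsto_const_nhds
  smul_mem' c g hg := by
    simpa only [Set.mem_ofPred_eq, inner_smul_left, mul_zero] using hg.const_mul _

def mixingSubspace (U : H →ₗᵢ[𝕜] H) : Submodule 𝕜 H where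
  carrier := {f | ∀ g, Tendsto (fun n ↦ ⟪g, (U ^ n) f⟫_𝕜) atTop (𝓝 0)}
  add_mem' hf hf' g := by
    simpa only [map_add, inner_add_right, add_zero] using (hf g).add (hf' g)
  zero_mem' g := by simpa only [map_zero, inner_zero_right] using tendsto_const_nhds
  smul_mem' c f hf g := by
    simpa only [map_smul, inner_smul_right, mul_zero] using (hf g).const_mul c

variable (U : H →ₗᵢ[𝕜] H)

theorem isClosed_decorrelatedSubspace (f : H) : IsClosed (decorrelatedSubspace U f : Set H) :=
  isClosed_setOf_tendsto_zero_of_lipschitzWith (K := ‖f‖₊) fun n ↦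
    LipschitzWith.of_dist_le_mul fun a b ↦ by
      simpa only [dist_eq_norm, ← inner_sub_left, (U ^ n).norm_map, mul_comm, coe_nnnorm]
        using norm_inner_le_norm (𝕜 := 𝕜) (a - b) ((U ^ n) f)

theorem isClosed_mixingSubspace : IsClosed (mixingSubspace U : Set H) := by
  have h : (mixingSubspace U : Set H) =
      ⋂ g, {f | Tendsto (fun n ↦ ⟪g, (U ^ n) f⟫_𝕜) atTop (𝓝 0)} :=
    (Set.iInter_ofPred _).symm
  rw [h]
  exact isClosed_iInter fun g ↦ isClosed_setOf_tendsto_zero_of_lipschitzWith fun n ↦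
    (innerSL 𝕜 g).lipschitz.comp (U ^ n).lipschitz

theorem tendsto_inner_pow_apply_pow_apply {f : H}
    (hf : Tendsto (fun n ↦ ⟪f, (U ^ n) f⟫_𝕜) atTop (𝓝 0)) (k : ℕ) :
    Tendsto (fun n ↦ ⟪(U ^ k) f, (U ^ n) f⟫_𝕜) atTop (𝓝 0) := by
  refine (hf.comp (tendsto_sub_atTop_nat k)).congr' ?_
  filter_upwards [eventually_ge_atTop k] with n hn
  rw [Function.comp_apply, ← (U ^ k).inner_map_map, ← Function.comp_apply (f := U ^ k), ← coe_mul,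
    ← pow_add, Nat.add_sub_cancel' hn]

theorem mem_mixingSubspace_of_tendsto [CompleteSpace H] {f : H}
    (hf : Tendsto (fun n ↦ ⟪f, (U ^ n) f⟫_𝕜) atTop (𝓝 0)) : f ∈ mixingSubspace U := by
  intro g
  set Z := (Submodule.span 𝕜 (Set.range fun k ↦ (U ^ k) f)).topologicalClosure
  have hZ : Z ≤ decorrelatedSubspace U f :=
    Submodule.topologicalClosure_minimal _
      (Submodule.span_le.2 <| Set.range_subset_iff.2 <| tendsto_inner_pow_apply_pow_apply U hf)
      (isClosed_decorrelatedSubspace U f)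
  have hZperp : Zᗮ ≤ decorrelatedSubspace U f := fun z hz ↦
    tendsto_const_nhds.congr fun n ↦ (Submodule.inner_left_of_mem_orthogonal
      (Submodule.le_topologicalClosure _ (Submodule.subset_span (Set.mem_range_self n))) hz).symm
  have hg : g ∈ Z ⊔ Zᗮ := by
    rw [Submodule.sup_orthogonal_of_hasOrthogonalProjection]; trivial
  exact sup_le hZ hZperp hg

theorem tendsto_inner_pow_apply_iff_mem_mixingSubspace [CompleteSpace H] {f : H} :
    Tendsto (fun n ↦ ⟪f, (U ^ n) f⟫_𝕜) atTop (𝓝 0) ↔ f ∈ mixingSubspace U :=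
  ⟨mem_mixingSubspace_of_tendsto U, fun hf ↦ hf f⟩

theorem inner_pow_apply_sub_inner_starProjection (K : Submodule 𝕜 H) [K.HasOrthogonalProjection]
    (hK : ∀ v ∈ K, U v = v) (f g : H) (n : ℕ) :
    ⟪f, (U ^ n) g⟫_𝕜 - ⟪K.starProjection f, K.starProjection g⟫_𝕜 =
      ⟪Kᗮ.starProjection f, (U ^ n) (Kᗮ.starProjection g)⟫_𝕜 := by
  have hKn : ∀ v ∈ K, (U ^ n) v = v := fun v hv ↦ by
    rw [coe_pow]; exact Function.iterate_fixed (hK v hv) n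
  have hproj : ∀ v ∈ K, ∀ x, ⟪v, x⟫_𝕜 = ⟪v, K.starProjection x⟫_𝕜 := fun v hv x ↦ by
    rw [← K.inner_starProjection_left_eq_right, Submodule.starProjection_eq_self_iff.2 hv]
  have hPf := K.starProjection_apply_mem f
  have hPg := K.starProjection_apply_mem g
  have h1 : ⟪f, K.starProjection g⟫_𝕜 = ⟪K.starProjection f, K.starProjection g⟫_𝕜 :=
    (K.inner_starProjection_left_eq_right f g).symm.trans (hproj _ hPf g)
  have h2 : ⟪K.starProjection f, (U ^ n) g⟫_𝕜 = ⟪K.starProjection f, K.starProjection g⟫_𝕜 := by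
    have := (U ^ n).inner_map_map (K.starProjection f) g
    rw [hKn _ hPf] at this
    exact this.trans (hproj _ hPf g)
  rw [Submodule.starProjection_orthogonal_val, Submodule.starProjection_orthogonal_val, map_sub,
    hKn _ hPg, inner_sub_left, inner_sub_right, inner_sub_right, h1, h2, sub_self, sub_zero]

end LinearIsometry

section Koopman

variable {Ω : Type*} [MeasurableSpace Ω] {μ : Measure Ω} {T : Ω → Ω}

lemma invSigma_le : invSigma T ≤ ‹MeasurableSpace Ω› := fun _ hA ↦ hA.1

instance fact_invSigma_le : Fact (invSigma T ≤ ‹MeasurableSpace Ω›) := ⟨invSigma_le⟩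

lemma comp_eq_self_of_measurable_invSigma {β : Type*} [MeasurableSpace β] [MeasurableSingletonClass β]
    {h : Ω → β} (hh : Measurable[invSigma T] h) : h ∘ T = h :=
  funext fun x ↦ show x ∈ T ⁻¹' (h ⁻¹' {h x}) by
    rw [(hh (measurableSet_singleton (h x))).2]; rfl

lemma compMeasurePreserving_eq_self_of_mem_lpMeas {E : Type*} [NormedAddCommGroup E]
    [NormedSpace ℂ E] {p : ENNReal} (hT : MeasurePreserving T μ μ) {F : Lp E p μ}
    (hF : F ∈ lpMeas E ℂ (invSigma T) p μ) : Lp.compMeasurePreserving T hT F = F := by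
  borelize E
  obtain ⟨h, hh, hFh⟩ := mem_lpMeas_iff_aestronglyMeasurable.1 hF
  refine Lp.ext ((Lp.coeFn_compMeasurePreserving F hT).trans ?_)
  calc ⇑F ∘ T =ᵐ[μ] h ∘ T := hT.quasiMeasurePreserving.ae_eq hFh
    _ = h := comp_eq_self_of_measurable_invSigma hh.measurable
    _ =ᵐ[μ] F := hFh.symm

lemma coeFn_compMeasurePreservingₗᵢ_pow {E : Type*} [NormedAddCommGroup E] [NormedSpace ℂ E]
    {p : ENNReal} [Fact (1 ≤ p)] (hT : MeasurePreserving T μ μ) (F : Lp E p μ) (n : ℕ) :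
    (Lp.compMeasurePreservingₗᵢ ℂ T hT ^ n) F =ᵐ[μ] F ∘ T^[n] := by
  have h : ⇑(Lp.compMeasurePreservingₗᵢ ℂ T hT ^ n) =
      ⇑(Lp.compMeasurePreserving (E := E) (p := p) T^[n] (hT.iterate n)) := by
    rw [LinearIsometry.coe_pow, ← Lp.compMeasurePreserving_iterate hT n]
    rfl
  rw [h]
  exact Lp.coeFn_compMeasurePreserving F (hT.iterate n)

theorem expCovInv_eq_inner [IsFiniteMeasure μ] (hT : MeasurePreserving T μ μ) {f g : Ω → ℂ}
    (hf : MemLp f 2 μ) (hg : MemLp g 2 μ) (n : ℕ) :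
    expCovInv μ T f g n =
      ⟪(lpMeas ℂ ℂ (invSigma T) 2 μ)ᗮ.starProjection (hf.toLp f),
        (Lp.compMeasurePreservingₗᵢ ℂ T hT ^ n)
          ((lpMeas ℂ ℂ (invSigma T) 2 μ)ᗮ.starProjection (hg.toLp g))⟫_ℂ := by
  have hK : ∀ v ∈ lpMeas ℂ ℂ (invSigma T) 2 μ, Lp.compMeasurePreservingₗᵢ ℂ T hT v = v :=
    fun _ hv ↦ compMeasurePreserving_eq_self_of_mem_lpMeas hT hv
  rw [← LinearIsometry.inner_pow_apply_sub_inner_starProjection _ _ hK, expCovInv, L2.inner_def,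
    L2.inner_def]
  congr 1 <;> refine integral_congr_ae ?_
  · filter_upwards [hf.coeFn_toLp, coeFn_compMeasurePreservingₗᵢ_pow hT (hg.toLp g) n,
      (hT.iterate n).quasiMeasurePreserving.ae_eq hg.coeFn_toLp] with x hfx hgx hgTx
    rw [RCLike.inner_apply, hfx, hgx, hgTx, Function.comp_apply, mul_comm]
  · filter_upwards [hf.condExpL2_ae_eq_condExp (𝕜 := ℂ) invSigma_le,
      hg.condExpL2_ae_eq_condExp (𝕜 := ℂ) invSigma_le] with x hfx hgx
    rw [RCLike.inner_apply, mul_comm, ← hfx, ← hgx]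
    rfl

end Koopman

section IndicatorConstLp

variable {α E : Type*} {m : MeasurableSpace α} {μ : Measure α} [NormedAddCommGroup E]
  {p : ENNReal}

lemma indicatorConstLp_sdiff {A B : Set α} (hA : MeasurableSet A) (hB : MeasurableSet B)
    (hμA : μ A ≠ ⊤) (hμB : μ B ≠ ⊤) (hAB : A ⊆ B) (c : E) :
    indicatorConstLp p (hB.diff hA) ((measure_mono Set.sdiff_subset).trans_lt hμB.lt_top).ne c =
      indicatorConstLp p hB hμB c - indicatorConstLp p hA hμA c := by
  ext1
  grw [Lp.coeFn_sub, indicatorConstLp_coeFn, indicatorConstLp_coeFn, indicatorConstLp_coeFn]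
  rw [Set.indicator_sdiff hAB]

lemma tendsto_indicatorConstLp_iUnion [IsFiniteMeasure μ] [Fact (1 ≤ p)] (hp : p ≠ ⊤)
    {s : ℕ → Set α} (hs : ∀ n, MeasurableSet (s n)) (hmono : Monotone s) (c : E) :
    Tendsto (fun n ↦ indicatorConstLp p (hs n) (measure_ne_top μ _) c) atTop
      (𝓝 (indicatorConstLp p (.iUnion hs) (measure_ne_top μ _) c)) := by
  refine tendsto_indicatorConstLp_set hp ?_
  simp_rw [symmDiff_of_le (Set.subset_iUnion s _)]
  have h := tendsto_measure_iInter_atTop (μ := μ)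
    (fun n ↦ ((MeasurableSet.iUnion hs).diff (hs n)).nullMeasurableSet)
    (fun _ _ hij ↦ Set.sdiff_subset_sdiff_right (hmono hij)) ⟨0, measure_ne_top μ _⟩
  rwa [← Set.sdiff_iUnion, Set.sdiff_self, measure_empty] at h

end IndicatorConstLp

section Dynkin

variable {Ω : Type*} [MeasurableSpace Ω] {μ : Measure Ω} {T : Ω → Ω}

def mixingModInvariant (hT : MeasurePreserving T μ μ) : Submodule ℂ (Lp ℂ 2 μ) :=
  (Lp.compMeasurePreservingₗᵢ (E := ℂ) (p := 2) ℂ T hT).mixingSubspace.comap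
    ((lpMeas ℂ ℂ (invSigma T) 2 μ)ᗮ.starProjection : Lp ℂ 2 μ →ₗ[ℂ] Lp ℂ 2 μ)

variable (hT : MeasurePreserving T μ μ)

theorem isClosed_mixingModInvariant : IsClosed (mixingModInvariant hT : Set (Lp ℂ 2 μ)) := by
  rw [mixingModInvariant, Submodule.comap_coe]
  exact (LinearIsometry.isClosed_mixingSubspace _).preimage (ContinuousLinearMap.continuous _)

theorem mem_mixingModInvariant_of_mem_lpMeas {F : Lp ℂ 2 μ}
    (hF : F ∈ lpMeas ℂ ℂ (invSigma T) 2 μ) : F ∈ mixingModInvariant hT := by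
  simp [mixingModInvariant, Submodule.starProjection_orthogonal_val,
    Submodule.starProjection_eq_self_iff.2 hF]

theorem tendsto_expCovInv_indicator_iff [IsFiniteMeasure μ] {A : Set Ω} (hA : MeasurableSet A) :
    Tendsto (fun n ↦ expCovInv μ T (A.indicator fun _ ↦ (1 : ℂ)) (A.indicator fun _ ↦ 1) n)
        atTop (𝓝 0) ↔
      indicatorConstLp 2 hA (measure_ne_top μ A) 1 ∈ mixingModInvariant hT := by
  have hA2 : MemLp (A.indicator fun _ ↦ (1 : ℂ)) 2 μ :=
    memLp_indicator_const 2 hA 1 (.inr (measure_ne_top μ A))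
  simp_rw [expCovInv_eq_inner hT hA2 hA2]
  exact LinearIsometry.tendsto_inner_pow_apply_iff_mem_mixingSubspace _

end Dynkin

/-- If every `A ∈ S` (a family of measurable sets) satisfies
`E(Cov_n(1_A,1_A|I)) → 0`, then so does every `A` in the Dynkin system generated by `S`. -/
theorem expCovInv_indicator_tendsto_zero_of_dynkin
    {Ω : Type*} [MeasurableSpace Ω] (μ : Measure Ω) [IsProbabilityMeasure μ]
    (T : Ω → Ω) (hT : MeasurePreserving T μ μ)
    (S : Set (Set Ω)) (hSmeas : ∀ A ∈ S, MeasurableSet A)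
    (hS : ∀ A ∈ S,
      Tendsto
        (fun n : ℕ =>
          expCovInv μ T (A.indicator fun _ => (1 : ℂ)) (A.indicator fun _ => (1 : ℂ)) n)
        atTop (𝓝 0)) :
    ∀ A : Set Ω, DynkinGen S A →
      Tendsto
        (fun n : ℕ =>
          expCovInv μ T (A.indicator fun _ => (1 : ℂ)) (A.indicator fun _ => (1 : ℂ)) n)
        atTop (𝓝 0) := by
  suffices h : ∀ A, DynkinGen S A → ∃ hA : MeasurableSet A,
      indicatorConstLp 2 hA (measure_ne_top μ A) (1 : ℂ) ∈ mixingModInvariant hT from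
    fun A hA ↦ (h A hA).elim fun hAm hmem ↦ (tendsto_expCovInv_indicator_iff hT hAm).2 hmem
  intro A hA
  induction hA with
  | basic A hA => exact ⟨hSmeas A hA, (tendsto_expCovInv_indicator_iff hT _).1 (hS A hA)⟩
  | univ =>
    exact ⟨.univ, mem_mixingModInvariant_of_mem_lpMeas hT <|
      mem_lpMeas_indicatorConstLp invSigma_le ⟨.univ, Set.preimage_univ⟩ _⟩
  | diff A B _ _ hAB ihA ihB =>
    obtain ⟨hA, hAG⟩ := ihA
    obtain ⟨hB, hBG⟩ := ihB
    refine ⟨hB.diff hA, ?_⟩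
    rw [indicatorConstLp_sdiff hA hB (measure_ne_top μ A) (measure_ne_top μ B) hAB]
    exact Submodule.sub_mem _ hBG hAG
  | iUnion_mono s hmono _ ih =>
    choose hs hsG using ih
    exact ⟨.iUnion hs, (isClosed_mixingModInvariant hT).mem_of_tendsto
      (tendsto_indicatorConstLp_iUnion ENNReal.ofNat_ne_top hs (monotone_nat_of_le_succ hmono) _)
      (.of_forall hsG)⟩

end
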